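/- Fix integers k ≥ 1 and C ≥ k + 1. Define Q(a,b) = exp(2a + bk) + k·exp(a + b(k+1)) + (C − k − 1)·exp((k+2)b) and R(a,b) = log(exp(2a + bk) / Q(a,b)). Then for all (a,b) ∈ ℝ², the partial derivative ∂R/∂a(a,b) is strictly positive and the partial derivative ∂R/∂b(a,b) is strictly negative. -/

import Mathlib

open Real

/-- `Q(a,b) = exp(2a + bk) + k·exp(a + b(k+1)) + (C − k − 1)·exp((k+2)b)`. -/
noncomputable def Qfun (k C : ℕ) (a b : ℝ) : ℝ :=
  Real.exp (2 * a + b * k) + k * Real.exp (a + b * (k + 1))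
    + ((C : ℝ) - k - 1) * Real.exp ((k + 2) * b)

/-- `R(a,b) = log(exp(2a + bk) / Q(a,b))`. -/
noncomputable def Rfun (k C : ℕ) (a b : ℝ) : ℝ :=
  Real.log (Real.exp (2 * a + b * k) / Qfun k C a b)

/-!
Every term of `Q(a,b)` and the numerator `exp(2a + bk)` scale by `exp((k+2)t)` under
`(a,b) ↦ (a+t, b+t)`, so `R(a,b) = g(a - b)` with `g(u) = R(u,0)`. Hence `∂R/∂a = g'(a-b)` and
`∂R/∂b = -g'(a-b)`, and it remains to see that `g(u) = 2u - log(e^{2u} + k e^u + (C-k-1))` has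
derivative `(k e^u + 2(C-k-1)) / (e^{2u} + k e^u + (C-k-1)) > 0`.
-/

variable {k C : ℕ}

lemma Qfun_eq_exp_mul_Qfun_sub (a b : ℝ) :
    Qfun k C a b = exp ((k + 2) * b) * Qfun k C (a - b) 0 := by
  have h₁ : exp (2 * a + b * k) = exp ((k + 2) * b) * exp (2 * (a - b)) := by
    rw [← exp_add]
    ring_nf
  have h₂ : exp (a + b * (k + 1)) = exp ((k + 2) * b) * exp (a - b) := by
    rw [← exp_add]
    ring_nf
  simp only [Qfun, h₁, h₂, zero_mul, mul_zero, add_zero, exp_zero]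
  ring

lemma Rfun_eq_Rfun_sub (a b : ℝ) : Rfun k C a b = Rfun k C (a - b) 0 := by
  have hnum : exp (2 * a + b * k) = exp ((k + 2) * b) * exp (2 * (a - b) + 0 * k) := by
    rw [← exp_add]
    ring_nf
  rw [Rfun, Rfun, Qfun_eq_exp_mul_Qfun_sub, hnum, mul_div_mul_left _ _ (exp_ne_zero _)]

lemma cast_sub_sub_one_nonneg (hkC : k + 1 ≤ C) : (0 : ℝ) ≤ C - k - 1 := by
  have : (k : ℝ) + 1 ≤ C := by exact_mod_cast hkC
  linarith

lemma Qfun_pos (hkC : k + 1 ≤ C) (a b : ℝ) : 0 < Qfun k C a b :=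
  add_pos_of_pos_of_nonneg (by positivity)
    (mul_nonneg (cast_sub_sub_one_nonneg hkC) (exp_pos _).le)

lemma hasDerivAt_Rfun_zero_right (hkC : k + 1 ≤ C) (u : ℝ) :
    HasDerivAt (fun x => Rfun k C x 0)
      ((k * exp u + 2 * (C - k - 1)) / Qfun k C u 0) u := by
  have hnum : HasDerivAt (fun x => exp (2 * x + 0 * k)) (2 * exp (2 * u)) u := by
    simpa [mul_comm] using (((hasDerivAt_id u).const_mul 2).add_const (0 * k : ℝ)).exp
  have hden : HasDerivAt (fun x => Qfun k C x 0) (2 * exp (2 * u) + k * exp u) u := by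
    have hmid : HasDerivAt (fun x => k * exp (x + 0 * (k + 1))) (k * exp u) u := by
      simpa using (((hasDerivAt_id u).add_const (0 * (k + 1) : ℝ)).exp.const_mul (k : ℝ))
    exact (hnum.add hmid).add_const _
  have hQ := (Qfun_pos hkC u 0).ne'
  refine ((hnum.div hden hQ).log (div_ne_zero (exp_ne_zero _) hQ)).congr_deriv ?_
  simp only [Pi.div_apply, zero_mul, add_zero]
  field_simp
  simp only [Qfun, zero_mul, mul_zero, add_zero, exp_zero]
  ring

lemma deriv_Rfun_zero_right_pos (hk : 1 ≤ k) (hkC : k + 1 ≤ C) (u : ℝ) :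
    0 < deriv (fun x => Rfun k C x 0) u := by
  rw [(hasDerivAt_Rfun_zero_right hkC u).deriv]
  have hk₀ : (0 : ℝ) < k := by exact_mod_cast hk
  have hc := cast_sub_sub_one_nonneg hkC
  exact div_pos (by positivity) (Qfun_pos hkC u 0)

/-- The partial derivative of `R` in `a` is strictly positive and the partial
derivative of `R` in `b` is strictly negative, everywhere. -/
theorem Rfun_partial_deriv_signs (k C : ℕ) (hk : 1 ≤ k) (hkC : k + 1 ≤ C) :
    ∀ a b : ℝ,
      0 < deriv (fun x => Rfun k C x b) a
        ∧ deriv (fun x => Rfun k C a x) b < 0 := by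
  intro a b
  have hg := deriv_Rfun_zero_right_pos hk hkC (a - b)
  rw [funext (Rfun_eq_Rfun_sub · b), funext (Rfun_eq_Rfun_sub a),
    deriv_comp_sub_const (fun x => Rfun k C x 0), deriv_comp_const_sub (fun x => Rfun k C x 0)]
  exact ⟨hg, neg_neg_of_pos hg⟩
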